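/- arXiv:2507.22355 — 4 statements merged into one kernel-verified Lean document; each statement's English description precedes it below -/
import Mathlib

section
/- Let U be a nonempty finite set, and for each u ∈ U let R^u be a random variable with values in a finite set Λ ⊂ ℝ; fix α ∈ (0,1]. Define λ* := min{λ ∈ Λ : min_{u ∈ U} P(R^u ≤ λ) ≥ α}, let λ*₋ be the left predecessor of λ* in Λ, and suppose u* ∈ U minimizes P(R^u ≤ λ*₋) over u ∈ U. Then VaR^{u*} = max_{u ∈ U} VaR^u, where VaR^u := min{λ ∈ Λ : P(R^u ≤ λ) ≥ α}. -/
open MeasureTheory Finset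

noncomputable def cdfOf {Ω : Type*} [MeasurableSpace Ω] (μ : Measure Ω) (X : Ω → ℝ) (l : ℝ) : ℝ :=
  (μ {ω | X ω ≤ l}).toReal

noncomputable def VaR {Ω : Type*} [MeasurableSpace Ω] (μ : Measure Ω) (X : Ω → ℝ) (α : ℝ) : ℝ :=
  sInf {l : ℝ | α ≤ cdfOf μ X l}

noncomputable def VaRFin {Ω : Type*} [MeasurableSpace Ω] (μ : Measure Ω) (X : Ω → ℝ)
    (Λ : Finset ℝ) (α : ℝ) : ℝ :=
  sInf {l : ℝ | l ∈ Λ ∧ α ≤ cdfOf μ X l}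

noncomputable def leftPred (Y : Finset ℝ) (hY : Y.Nonempty) (l : ℝ) : ℝ :=
  if h : Y.min' hY < l then
    (Y.filter fun y => y < l).max' ⟨Y.min' hY, Finset.mem_filter.mpr ⟨Y.min'_mem hY, h⟩⟩
  else l - 1

private lemma cdf_mono' {Ω : Type*} [MeasurableSpace Ω] (μ : Measure Ω) [IsProbabilityMeasure μ]
    (X : Ω → ℝ) {l1 l2 : ℝ} (h : l1 ≤ l2) : cdfOf μ X l1 ≤ cdfOf μ X l2 := by
  apply ENNReal.toReal_mono (measure_ne_top μ _)
  exact measure_mono (fun ω hω => le_trans hω h)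

theorem stmt7 {Ω U : Type*} [MeasurableSpace Ω] [Fintype U] [Nonempty U]
    (μ : Measure Ω) [IsProbabilityMeasure μ]
    (R : U → Ω → ℝ) (Λ : Finset ℝ) (hΛ : Λ.Nonempty)
    (hR : ∀ u ω, R u ω ∈ Λ) (α : ℝ) (hα0 : 0 < α) (hα1 : α ≤ 1)
    (lamstar : ℝ)
    (hstar : lamstar = sInf {l : ℝ | l ∈ Λ ∧
        α ≤ Finset.univ.inf' Finset.univ_nonempty (fun u => cdfOf μ (R u) l)})
    (ustar : U)
    (hopt : ∀ u : U, cdfOf μ (R ustar) (leftPred Λ hΛ lamstar)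
        ≤ cdfOf μ (R u) (leftPred Λ hΛ lamstar)) :
    VaRFin μ (R ustar) Λ α
      = Finset.univ.sup' Finset.univ_nonempty (fun u => VaRFin μ (R u) Λ α) := by
  classical
  set F : U → Finset ℝ := fun u => Λ.filter (fun l => α ≤ cdfOf μ (R u) l) with hF
  have hmaxmem : ∀ u, Λ.max' hΛ ∈ F u := by
    intro u
    refine mem_filter.mpr ⟨Λ.max'_mem hΛ, ?_⟩
    have hset : {ω | R u ω ≤ Λ.max' hΛ} = Set.univ := by
      ext ω; simp [Λ.le_max' _ (hR u ω)]
    simp [cdfOf, hset, hα1]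
  have hFne : ∀ u, (F u).Nonempty := fun u => ⟨_, hmaxmem u⟩
  have hVaR : ∀ u, VaRFin μ (R u) Λ α = (F u).min' (hFne u) := by
    intro u
    have hset : {l : ℝ | l ∈ Λ ∧ α ≤ cdfOf μ (R u) l} = ↑(F u) := by
      ext l; simp [hF]
    rw [VaRFin, hset, (hFne u).csInf_eq_min']
  have hmemF : ∀ u, ∀ l ∈ Λ, ((F u).min' (hFne u) ≤ l → l ∈ F u) := by
    intro u l hl hle
    refine mem_filter.mpr ⟨hl, ?_⟩
    have h1 := (mem_filter.mp ((F u).min'_mem (hFne u))).2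
    exact h1.trans (cdf_mono' μ (R u) hle)
  set T : Finset ℝ := Λ.filter
    (fun l => α ≤ Finset.univ.inf' Finset.univ_nonempty (fun u => cdfOf μ (R u) l)) with hT
  have hTmem : ∀ l, l ∈ T ↔ l ∈ Λ ∧ ∀ u, α ≤ cdfOf μ (R u) l := by
    intro l
    simp [hT, Finset.le_inf'_iff]
  have hTne : T.Nonempty :=
    ⟨Λ.max' hΛ, (hTmem _).mpr ⟨Λ.max'_mem hΛ, fun u => (mem_filter.mp (hmaxmem u)).2⟩⟩
  have hlam : lamstar = T.min' hTne := by
    rw [hstar]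
    have hset : {l : ℝ | l ∈ Λ ∧
        α ≤ Finset.univ.inf' Finset.univ_nonempty (fun u => cdfOf μ (R u) l)} = ↑T := by
      ext l; simp [hT]
    rw [hset, hTne.csInf_eq_min']
  have hsup_le : ∀ u, (F u).min' (hFne u) ≤ T.min' hTne := by
    intro u
    have hm := (hTmem _).mp (T.min'_mem hTne)
    exact (F u).min'_le _ (mem_filter.mpr ⟨hm.1, hm.2 u⟩)
  have hlam_eq : T.min' hTne
      = Finset.univ.sup' Finset.univ_nonempty (fun u => (F u).min' (hFne u)) := by
    apply le_antisymm
    · obtain ⟨u0, -, hu0⟩ :=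
        Finset.exists_mem_eq_sup' Finset.univ_nonempty (fun u => (F u).min' (hFne u))
      set s := Finset.univ.sup' Finset.univ_nonempty (fun u => (F u).min' (hFne u)) with hs
      have hsΛ : s ∈ Λ := by
        rw [hu0]; exact (mem_filter.mp ((F u0).min'_mem (hFne u0))).1
      have hsT : s ∈ T := (hTmem s).mpr ⟨hsΛ, fun u =>
        (mem_filter.mp (hmemF u s hsΛ (hs ▸ Finset.le_sup' (fun u => (F u).min' (hFne u)) (Finset.mem_univ u)))).2⟩
      exact T.min'_le _ hsT
    · exact Finset.sup'_le _ _ (fun u _ => hsup_le u)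
  have hmain : (F ustar).min' (hFne ustar) = T.min' hTne := by
    refine le_antisymm (hsup_le ustar) ?_
    by_contra h
    push_neg at h
    set m := (F ustar).min' (hFne ustar)
    have hmΛ : m ∈ Λ := (mem_filter.mp ((F ustar).min'_mem (hFne ustar))).1
    have hmlt : m < lamstar := by rw [hlam]; exact h
    have hcond : Λ.min' hΛ < lamstar := lt_of_le_of_lt (Λ.min'_le _ hmΛ) hmlt
    set lp := leftPred Λ hΛ lamstar with hlp
    have hlpdef : lp = (Λ.filter fun y => y < lamstar).max'
        ⟨Λ.min' hΛ, Finset.mem_filter.mpr ⟨Λ.min'_mem hΛ, hcond⟩⟩ := by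
      rw [hlp, leftPred, dif_pos hcond]
    have hmlp : m ≤ lp := by
      rw [hlpdef]
      exact Finset.le_max' (Λ.filter fun y => y < lamstar) m (mem_filter.mpr ⟨hmΛ, hmlt⟩)
    have hlpmem := (Λ.filter fun y => y < lamstar).max'_mem
      ⟨Λ.min' hΛ, Finset.mem_filter.mpr ⟨Λ.min'_mem hΛ, hcond⟩⟩
    rw [← hlpdef] at hlpmem
    obtain ⟨hlpΛ, hlplt⟩ := mem_filter.mp hlpmem
    have hαlp : α ≤ cdfOf μ (R ustar) lp :=
      ((mem_filter.mp ((F ustar).min'_mem (hFne ustar))).2).trans (cdf_mono' μ (R ustar) hmlp)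
    have hlpT : lp ∈ T := (hTmem lp).mpr ⟨hlpΛ, fun u => hαlp.trans (hopt u)⟩
    have hle2 := T.min'_le _ hlpT
    rw [hlam] at hlplt
    exact absurd hle2 (not_le.mpr hlplt)
  rw [hVaR ustar, hmain, hlam_eq]
  exact Finset.sup'_congr _ rfl (fun u _ => (hVaR u).symm)
end

section
/- Let U be a nonempty finite set of policies and for each u ∈ U let R^u be a random variable with finite support; fix α ∈ (0,1]. A policy u* ∈ U satisfies VaR^{u*} = max_{u ∈ U} VaR^u if and only if min_{u ∈ U} P(R^u ≤ VaR^{u*}) ≥ α, where VaR^u := inf{λ : P(R^u ≤ λ) ≥ α}. -/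
open MeasureTheory Finset

lemma VaR_le_iff {Ω : Type*} [MeasurableSpace Ω] (μ : Measure Ω) [IsProbabilityMeasure μ]
    (X : Ω → ℝ) (Λ : Finset ℝ) (hΛ : Λ.Nonempty) (hX : ∀ ω, X ω ∈ Λ)
    (α : ℝ) (hα0 : 0 < α) (hα1 : α ≤ 1) (l : ℝ) :
    VaR μ X α ≤ l ↔ α ≤ cdfOf μ X l := by
  set S : Set ℝ := {l : ℝ | α ≤ cdfOf μ X l} with hS
  have hmono : ∀ a b : ℝ, a ≤ b → cdfOf μ X a ≤ cdfOf μ X b := by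
    intro a b hab
    exact ENNReal.toReal_mono (measure_ne_top μ _)
      (measure_mono (fun ω h => le_trans h hab))
  have hM : cdfOf μ X (Λ.max' hΛ) = 1 := by
    unfold cdfOf
    have h1 : {ω | X ω ≤ Λ.max' hΛ} = Set.univ :=
      Set.eq_univ_of_forall fun ω => Λ.le_max' _ (hX ω)
    rw [h1, measure_univ]; simp
  have hSne : S.Nonempty := ⟨Λ.max' hΛ, by simp only [hS, Set.mem_setOf_eq, hM]; exact hα1⟩
  have hzero : ∀ l : ℝ, l ∈ S → ¬ l < Λ.min' hΛ := by
    intro l hl hlt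
    have hempty : {ω | X ω ≤ l} = ∅ := by
      ext ω
      simp only [Set.mem_setOf_eq, Set.mem_empty_iff_false, iff_false, not_le]
      exact lt_of_lt_of_le hlt (Λ.min'_le _ (hX ω))
    have : cdfOf μ X l = 0 := by unfold cdfOf; rw [hempty, measure_empty]; simp
    have := hl
    simp only [hS, Set.mem_setOf_eq, this] at this ⊢
    linarith [hl.out, this]
  have hbdd : BddBelow S := ⟨Λ.min' hΛ, fun l hl => not_lt.mp (hzero l hl)⟩
  have hFne : (Λ.filter (fun y => α ≤ cdfOf μ X y)).Nonempty :=
    ⟨Λ.max' hΛ, Finset.mem_filter.mpr ⟨Λ.max'_mem hΛ, by rw [hM]; exact hα1⟩⟩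
  set v : ℝ := (Λ.filter (fun y => α ≤ cdfOf μ X y)).min' hFne with hv
  have hvS : v ∈ S := (Finset.mem_filter.mp ((Λ.filter _).min'_mem hFne)).2
  have hvlb : ∀ l ∈ S, v ≤ l := by
    intro l hl
    have hcl : α ≤ cdfOf μ X l := hl
    have hne : {ω | X ω ≤ l}.Nonempty := by
      by_contra h
      rw [Set.not_nonempty_iff_eq_empty] at h
      have : cdfOf μ X l = 0 := by unfold cdfOf; rw [h, measure_empty]; simp
      rw [this] at hcl; linarith
    obtain ⟨ω, hω⟩ := hne
    have hFl : (Λ.filter (fun z => z ≤ l)).Nonempty :=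
      ⟨X ω, Finset.mem_filter.mpr ⟨hX ω, hω⟩⟩
    set y : ℝ := (Λ.filter (fun z => z ≤ l)).max' hFl with hy
    have hyl : y ≤ l := (Finset.mem_filter.mp ((Λ.filter _).max'_mem hFl)).2
    have hset : {ω' | X ω' ≤ l} = {ω' | X ω' ≤ y} := by
      ext ω'
      simp only [Set.mem_setOf_eq]
      constructor
      · intro h
        exact (Λ.filter (fun z => z ≤ l)).le_max' (X ω') (Finset.mem_filter.mpr ⟨hX ω', h⟩)
      · intro h; exact h.trans hyl
    have hcy : α ≤ cdfOf μ X y := by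
      unfold cdfOf; rw [← hset]; exact hcl
    have hyF : y ∈ Λ.filter (fun y => α ≤ cdfOf μ X y) :=
      Finset.mem_filter.mpr ⟨(Finset.mem_filter.mp ((Λ.filter _).max'_mem hFl)).1, hcy⟩
    exact le_trans (Finset.min'_le _ _ hyF) hyl
  have hInf : sInf S = v := le_antisymm (csInf_le hbdd hvS) (le_csInf hSne hvlb)
  have hVaR : VaR μ X α = v := hInf
  constructor
  · intro h
    calc α ≤ cdfOf μ X v := hvS
    _ ≤ cdfOf μ X l := hmono _ _ (hVaR ▸ h)
  · intro h
    exact csInf_le hbdd h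

theorem stmt9 {Ω U : Type*} [MeasurableSpace Ω] [Fintype U] [Nonempty U]
    (μ : Measure Ω) [IsProbabilityMeasure μ]
    (R : U → Ω → ℝ) (Λ : U → Finset ℝ) (hΛ : ∀ u, (Λ u).Nonempty)
    (hR : ∀ u ω, R u ω ∈ Λ u) (α : ℝ) (hα0 : 0 < α) (hα1 : α ≤ 1)
    (ustar : U) :
    VaR μ (R ustar) α = Finset.univ.sup' Finset.univ_nonempty (fun u => VaR μ (R u) α)
      ↔ α ≤ Finset.univ.inf' Finset.univ_nonempty
          (fun u => cdfOf μ (R u) (VaR μ (R ustar) α)) := by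
  have key : ∀ (u : U) (l : ℝ), VaR μ (R u) α ≤ l ↔ α ≤ cdfOf μ (R u) l :=
    fun u => VaR_le_iff μ (R u) (Λ u) (hΛ u) (hR u) α hα0 hα1
  constructor
  · intro h
    rw [Finset.le_inf'_iff]
    intro u _
    rw [← key u]
    rw [h]
    exact Finset.le_sup' (fun u => VaR μ (R u) α) (Finset.mem_univ u)
  · intro h
    refine le_antisymm (Finset.le_sup' (fun u => VaR μ (R u) α) (Finset.mem_univ ustar)) ?_
    rw [Finset.sup'_le_iff]
    intro u _
    rw [key u]
    exact le_trans h (Finset.inf'_le _ (Finset.mem_univ u))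
end

section
/- Let U be a nonempty finite set and for each u ∈ U let R^u be a random variable with values in a common finite set Λ ⊂ ℝ; fix α ∈ (0,1]. Let λ* := min_{u ∈ U} VaR^u and suppose u* ∈ U maximizes P(R^u ≤ λ*) over u ∈ U. Then VaR^{u*} = λ*, i.e., u* achieves the minimal VaR. -/
open MeasureTheory Finset

theorem stmt11 {Ω U : Type*} [MeasurableSpace Ω] [Fintype U] [Nonempty U]
    (μ : Measure Ω) [IsProbabilityMeasure μ]
    (R : U → Ω → ℝ) (Λ : Finset ℝ) (hΛ : Λ.Nonempty)
    (hR : ∀ u ω, R u ω ∈ Λ) (α : ℝ) (hα0 : 0 < α) (hα1 : α ≤ 1)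
    (lamstar : ℝ)
    (hstar : lamstar = Finset.univ.inf' Finset.univ_nonempty (fun u => VaRFin μ (R u) Λ α))
    (ustar : U)
    (hopt : ∀ u : U, cdfOf μ (R u) lamstar ≤ cdfOf μ (R ustar) lamstar) :
    VaRFin μ (R ustar) Λ α = lamstar := by
  -- the feasible set for any u
  set S : U → Set ℝ := fun u => {l : ℝ | l ∈ Λ ∧ α ≤ cdfOf μ (R u) l} with hS
  have hSfin : ∀ u, (S u).Finite := fun u =>
    Set.Finite.subset Λ.finite_toSet (fun l hl => hl.1)
  have hSne : ∀ u, (S u).Nonempty := by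
    intro u
    refine ⟨Λ.max' hΛ, Λ.max'_mem hΛ, ?_⟩
    have : {ω : Ω | R u ω ≤ Λ.max' hΛ} = Set.univ := by
      ext ω; simp [Λ.le_max' _ (hR u ω)]
    simp only [cdfOf, this, measure_univ, ENNReal.toReal_one]
    exact hα1
  have hmem : ∀ u, VaRFin μ (R u) Λ α ∈ S u := fun u =>
    (hSne u).csInf_mem (hSfin u)
  -- lamstar is attained at some u0
  obtain ⟨u0, _, hu0⟩ := Finset.exists_mem_eq_inf' (Finset.univ_nonempty (α := U))
    (fun u => VaRFin μ (R u) Λ α)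
  rw [← hstar] at hu0
  have hlam_mem : lamstar ∈ S u0 := hu0 ▸ hmem u0
  have hlam_star : lamstar ∈ S ustar :=
    ⟨hlam_mem.1, le_trans hlam_mem.2 (hopt u0)⟩
  have hbdd : BddBelow (S ustar) := (hSfin ustar).bddBelow
  have h1 : VaRFin μ (R ustar) Λ α ≤ lamstar := csInf_le hbdd hlam_star
  have h2 : lamstar ≤ VaRFin μ (R ustar) Λ α := by
    rw [hstar]
    exact Finset.inf'_le _ (Finset.mem_univ ustar)
  linarith
end

section
/- Consider a finite-horizon MDP with finite state space S, finite action space A, horizon T, and reward function r. Define the augmented state space S̃ = S × ℝ with dynamics λ_{t+1} = λ_t − r(s_t, a_t), zero intermediate rewards, and terminal reward 𝟙{0 ≤ λ_T}. Then for any Markov policy ũ on the augmented MDP and the corresponding history-dependent policy u on the original MDP given by u_t(s_0,a_0,…,s_t) = ũ_t(s_t, λ_0 − Σ_{τ<t} r(s_τ,a_τ)), the T-horizon expected terminal reward of ũ from (s_0, λ_0) equals P^u_{s_0}(Σ_{t=0}^{T−1} r(s_t,a_t) ≤ λ_0). -/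
open Finset

noncomputable def probLE {S A : Type*} [Fintype S] (P : S → A → S → ℝ) (r : S → A → ℝ)
    (u : List (S × A) → S → A) (l0 : ℝ) : ℕ → List (S × A) → S → ℝ
  | 0, h, _ => if (h.map fun p => r p.1 p.2).sum ≤ l0 then 1 else 0
  | n+1, h, s =>
      ∑ s' : S, P s (u h s) s' * probLE P r u l0 n (h ++ [(s, u h s)]) s'

noncomputable def Vaug {S A : Type*} [Fintype S] (P : S → A → S → ℝ) (r : S → A → ℝ)
    (util : ℕ → S → ℝ → A) : ℕ → ℕ → S → ℝ → ℝ
  | _, 0, _, l => if 0 ≤ l then 1 else 0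
  | t, n+1, s, l =>
      ∑ s' : S, P s (util t s l) s' * Vaug P r util (t+1) n s' (l - r s (util t s l))

theorem stmt16 {S A : Type*} [Fintype S] [Fintype A]
    (P : S → A → S → ℝ) (r : S → A → ℝ)
    (hP0 : ∀ s a s', 0 ≤ P s a s') (hP1 : ∀ s a, ∑ s' : S, P s a s' = 1)
    (T : ℕ) (util : ℕ → S → ℝ → A) (s0 : S) (l0 : ℝ)
    (u : List (S × A) → S → A)
    (hu : ∀ h s, u h s = util h.length s (l0 - (h.map fun p => r p.1 p.2).sum)) :
    probLE P r u l0 T [] s0 = Vaug P r util 0 T s0 l0 := by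
  suffices key : ∀ n (h : List (S × A)) (s : S),
      probLE P r u l0 n h s =
        Vaug P r util h.length n s (l0 - (h.map fun p => r p.1 p.2).sum) by
    simpa using key T [] s0
  intro n
  induction n with
  | zero =>
    intro h s
    simp only [probLE, Vaug, sub_nonneg]
  | succ n ih =>
    intro h s
    simp only [probLE, Vaug, hu h s]
    refine Finset.sum_congr rfl fun s' _ => ?_
    rw [ih]
    simp [sub_sub]
end
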